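/- Let i_k(G) denote the number of independent sets of size k in a graph G on n vertices, with i_{k-1}(G) > 0 and k ≥ 2. Then (k²·i_k(G)/i_{k-1}(G) − n)/(k² − 1) ≤ i_{k+1}(G)/i_k(G), provided i_k(G) > 0 (Moon–Moser inequality for independent sets). -/

import Mathlib

open Finset MeasureTheory Real
open scoped Classical

noncomputable def indSets {V : Type*} [Fintype V] (G : SimpleGraph V) : Finset (Finset V) :=
  Finset.univ.filter (fun s => ∀ u ∈ s, ∀ v ∈ s, ¬ G.Adj u v)

/-- The independence polynomial (hard-core partition function). -/
noncomputable def indPoly {V : Type*} [Fintype V] (G : SimpleGraph V) (x : ℝ) : ℝ :=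
  ∑ s ∈ indSets G, x ^ s.card

/-- Expected size of an independent set from the hard-core model at fugacity x. -/
noncomputable def avgSize {V : Type*} [Fintype V] (G : SimpleGraph V) (x : ℝ) : ℝ :=
  x * deriv (indPoly G) x / indPoly G x

/-- Number of independent sets of size k. -/
noncomputable def numIs {V : Type*} [Fintype V] (G : SimpleGraph V) (k : ℕ) : ℕ :=
  ((indSets G).filter (fun s => s.card = k)).card

/-!
Call a vertex `v ∉ T` an extender of an independent set `T` if `T ∪ {v}` is independent.
Counting pairs `(T, v)` with `|T| = k - 1` and `v` an extender of `T` through `S = T ∪ {v}` gives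
`∑_T |ext T| = k i_k` and `∑_T |ext T|² = ∑_{|S| = k} ∑_{u ∈ S} |ext (S \ {u})|`.
A vertex that does not extend `S` extends `S \ {u}` for at most one `u ∈ S`, so the inner sum is
at most `n + (k - 1) |ext S|`, and summing over `S` bounds `∑_T |ext T|²` by
`n i_k + (k - 1)(k + 1) i_{k+1}`. Cauchy–Schwarz then gives
`(k i_k)² ≤ i_{k-1} (n i_k + (k² - 1) i_{k+1})`, which rearranges to the claim.
-/

section MoonMoser

variable {V : Type*} [Fintype V] (G : SimpleGraph V)

noncomputable def indSetsOfCard (k : ℕ) : Finset (Finset V) :=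
  (indSets G).filter (fun s => s.card = k)

noncomputable def extenders (T : Finset V) : Finset V :=
  univ.filter (fun v => v ∉ T ∧ insert v T ∈ indSets G)

variable {G}

lemma mem_indSets {s : Finset V} : s ∈ indSets G ↔ ∀ u ∈ s, ∀ v ∈ s, ¬ G.Adj u v := by
  simp [indSets]

lemma insert_mem_indSets {s : Finset V} {v : V} :
    insert v s ∈ indSets G ↔ s ∈ indSets G ∧ ∀ w ∈ s, ¬ G.Adj v w := by
  simp only [mem_indSets, forall_mem_insert, G.irrefl, not_false_eq_true, true_and]
  grind [G.adj_comm]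

lemma mem_indSets_of_subset {s t : Finset V} (h : t ⊆ s) (hs : s ∈ indSets G) :
    t ∈ indSets G := by
  rw [mem_indSets] at *
  exact fun u hu v hv => hs u (h hu) v (h hv)

lemma mem_indSetsOfCard {k : ℕ} {s : Finset V} :
    s ∈ indSetsOfCard G k ↔ s ∈ indSets G ∧ s.card = k := by
  simp [indSetsOfCard]

lemma mem_extenders {T : Finset V} {v : V} :
    v ∈ extenders G T ↔ v ∉ T ∧ insert v T ∈ indSets G := by
  simp [extenders]

lemma numIs_eq_card_indSetsOfCard (k : ℕ) : numIs G k = #(indSetsOfCard G k) := rfl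

lemma sum_sum_extenders_eq (m : ℕ) (f : Finset V → V → ℕ) :
    ∑ T ∈ indSetsOfCard G m, ∑ v ∈ extenders G T, f T v
      = ∑ S ∈ indSetsOfCard G (m + 1), ∑ u ∈ S, f (S.erase u) u := by
  rw [sum_sigma', sum_sigma']
  refine sum_nbij' (fun p => ⟨insert p.2 p.1, p.2⟩) (fun q => ⟨q.1.erase q.2, q.2⟩)
    ?_ ?_ ?_ ?_ ?_
  · rintro ⟨T, v⟩ hp
    simp only [mem_sigma, mem_indSetsOfCard, mem_extenders] at hp ⊢
    obtain ⟨⟨-, rfl⟩, hvT, hind⟩ := hp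
    exact ⟨⟨hind, card_insert_of_notMem hvT⟩, mem_insert_self _ _⟩
  · rintro ⟨S, u⟩ hq
    simp only [mem_sigma, mem_indSetsOfCard, mem_extenders] at hq ⊢
    obtain ⟨⟨hS, hcard⟩, hu⟩ := hq
    refine ⟨⟨mem_indSets_of_subset (erase_subset _ _) hS, ?_⟩, notMem_erase _ _, ?_⟩
    · simp [card_erase_of_mem hu, hcard]
    · rwa [insert_erase hu]
  all_goals
    rintro ⟨T, v⟩ hp
    simp only [mem_sigma, mem_extenders] at hp
  · simp [erase_insert hp.2.1]
  · simp [insert_erase hp.2]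
  · simp [erase_insert hp.2.1]

lemma sum_card_extenders (m : ℕ) :
    ∑ T ∈ indSetsOfCard G m, #(extenders G T) = (m + 1) * numIs G (m + 1) := by
  have h := sum_sum_extenders_eq (G := G) m (fun _ _ => 1)
  simp only [sum_const, smul_eq_mul, mul_one] at h
  rw [h, sum_congr rfl fun S hS => (mem_indSetsOfCard.mp hS).2, sum_const, smul_eq_mul,
    mul_comm, numIs_eq_card_indSetsOfCard]

lemma sum_card_extenders_sq (m : ℕ) :
    ∑ T ∈ indSetsOfCard G m, #(extenders G T) ^ 2
      = ∑ S ∈ indSetsOfCard G (m + 1), ∑ u ∈ S, #(extenders G (S.erase u)) := by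
  rw [← sum_sum_extenders_eq m fun T _ => #(extenders G T)]
  simp only [sq, sum_const, smul_eq_mul]

lemma card_filter_mem_extenders_erase_le_one {S : Finset V} {v : V} (hS : S ∈ indSets G)
    (hv : v ∉ extenders G S) : #{u ∈ S | v ∈ extenders G (S.erase u)} ≤ 1 := by
  refine card_le_one.mpr fun u₁ hu₁ u₂ hu₂ => ?_
  simp only [mem_filter, mem_extenders, insert_mem_indSets] at hu₁ hu₂
  by_contra hne
  by_cases hvS : v ∈ S
  · have h₁ : u₁ = v := by_contra fun h => hu₁.2.1 (mem_erase.mpr ⟨Ne.symm h, hvS⟩)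
    have h₂ : u₂ = v := by_contra fun h => hu₂.2.1 (mem_erase.mpr ⟨Ne.symm h, hvS⟩)
    exact hne (h₁.trans h₂.symm)
  · -- every `w ∈ S` survives in `S.erase u₁` or in `S.erase u₂`
    refine hv (mem_extenders.mpr ⟨hvS, insert_mem_indSets.mpr ⟨hS, fun w hw => ?_⟩⟩)
    by_cases hw₁ : w = u₁
    · exact hu₂.2.2.2 w (mem_erase.mpr ⟨hw₁ ▸ hne, hw⟩)
    · exact hu₁.2.2.2 w (mem_erase.mpr ⟨hw₁, hw⟩)

lemma sum_card_extenders_erase_le {S : Finset V} (hS : S ∈ indSets G) :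
    ∑ u ∈ S, #(extenders G (S.erase u)) ≤ Fintype.card V + (#S - 1) * #(extenders G S) := by
  have hcount : ∀ v, #{u ∈ S | v ∈ extenders G (S.erase u)}
      ≤ 1 + (#S - 1) * if v ∈ extenders G S then 1 else 0 := by
    intro v
    split_ifs with hv
    · exact (card_filter_le _ _).trans (by omega)
    · simpa using card_filter_mem_extenders_erase_le_one hS hv
  calc ∑ u ∈ S, #(extenders G (S.erase u))
      = ∑ v, #{u ∈ S | v ∈ extenders G (S.erase u)} := by
        simpa [bipartiteAbove, bipartiteBelow] using
          sum_card_bipartiteAbove_eq_sum_card_bipartiteBelow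
            (fun u v => v ∈ extenders G (S.erase u)) (s := S) (t := univ)
    _ ≤ ∑ v, (1 + (#S - 1) * if v ∈ extenders G S then 1 else 0) :=
        sum_le_sum fun v _ => hcount v
    _ = Fintype.card V + (#S - 1) * #(extenders G S) := by
        simp [sum_add_distrib, mul_comm]

lemma sq_mul_numIs_le (m : ℕ) :
    ((m + 1) * numIs G (m + 1)) ^ 2
      ≤ numIs G m * (Fintype.card V * numIs G (m + 1) + m * ((m + 2) * numIs G (m + 2))) := by
  have hlocal : ∑ T ∈ indSetsOfCard G m, #(extenders G T) ^ 2
      ≤ Fintype.card V * numIs G (m + 1) + m * ((m + 2) * numIs G (m + 2)) :=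
    calc ∑ T ∈ indSetsOfCard G m, #(extenders G T) ^ 2
        = ∑ S ∈ indSetsOfCard G (m + 1), ∑ u ∈ S, #(extenders G (S.erase u)) :=
          sum_card_extenders_sq m
      _ ≤ ∑ S ∈ indSetsOfCard G (m + 1), (Fintype.card V + m * #(extenders G S)) := by
          refine sum_le_sum fun S hS => ?_
          obtain ⟨hind, hcard⟩ := mem_indSetsOfCard.mp hS
          simpa [hcard] using sum_card_extenders_erase_le hind
      _ = Fintype.card V * numIs G (m + 1) + m * ((m + 2) * numIs G (m + 2)) := by
          rw [sum_add_distrib, ← mul_sum, sum_card_extenders, sum_const, smul_eq_mul, mul_comm]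
          rfl
  calc ((m + 1) * numIs G (m + 1)) ^ 2
      = (∑ T ∈ indSetsOfCard G m, #(extenders G T)) ^ 2 := by rw [sum_card_extenders]
    _ ≤ #(indSetsOfCard G m) * ∑ T ∈ indSetsOfCard G m, #(extenders G T) ^ 2 :=
        sq_sum_le_card_mul_sum_sq
    _ ≤ _ := Nat.mul_le_mul_left _ hlocal

end MoonMoser

theorem stmt19 {V : Type*} [Fintype V] (G : SimpleGraph V) (k : ℕ) (hk : 2 ≤ k)
    (h1 : 0 < numIs G (k - 1)) (h2 : 0 < numIs G k) :
    ((k : ℝ) ^ 2 * numIs G k / numIs G (k - 1) - (Fintype.card V : ℝ))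
        / ((k : ℝ) ^ 2 - 1)
      ≤ (numIs G (k + 1) : ℝ) / numIs G k := by
  obtain ⟨m, rfl⟩ : ∃ m, k = m + 1 := ⟨k - 1, by omega⟩
  have key : ((m + 1 : ℝ) * numIs G (m + 1)) ^ 2 ≤ numIs G m *
      (Fintype.card V * numIs G (m + 1) + m * ((m + 2) * numIs G (m + 2))) := by
    exact_mod_cast sq_mul_numIs_le m
  push_cast
  simp only [Nat.add_sub_cancel] at h1 ⊢
  have ha : (0 : ℝ) < numIs G m := by exact_mod_cast h1
  have hb : (0 : ℝ) < numIs G (m + 1) := by exact_mod_cast h2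
  have hm : (1 : ℝ) ≤ m := by exact_mod_cast (by omega : 1 ≤ m)
  rw [div_le_div_iff₀ (by nlinarith) hb, sub_mul, div_mul_eq_mul_div, sub_le_iff_le_add,
    div_le_iff₀ ha]
  nlinarith
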